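/- For arbitrary parameters α > 0 and β > 0 with ψ_Q(β) > 0, the error of the Tikhonov approximation satisfies ‖u_α − u_*‖ ≤ (1 + T(α, β)) e1(β), where T(α, β) = ‖u_α − u_β‖ / ψ_Q(β). -/
import Mathlib


open MeasureTheory
open scoped RealInnerProductSpace

noncomputable section

variable {H F : Type*} [NormedAddCommGroup H] [InnerProductSpace ℝ H] [CompleteSpace H]
  [NormedAddCommGroup F] [InnerProductSpace ℝ F] [CompleteSpace F]

/-- The inverse `(α I + A* A)⁻¹` (as `Ring.inverse`; for `α > 0` the operator
`α I + A* A` is boundedly invertible, so `Ring.inverse` is its genuine inverse). -/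
def tikInv (A : H →L[ℝ] F) (α : ℝ) : H →L[ℝ] H :=
  Ring.inverse (α • (1 : H →L[ℝ] H) + (ContinuousLinearMap.adjoint A).comp A)

/-- Tikhonov approximation `u_α = (α I + A* A)⁻¹ A* f`. -/
def tikSol (A : H →L[ℝ] F) (f : F) (α : ℝ) : H :=
  tikInv A α (ContinuousLinearMap.adjoint A f)

/-- Quasi-optimality function `ψ_Q(α) = α ‖(α I + A* A)⁻² A* f‖`. -/
def psiQ (A : H →L[ℝ] F) (f : F) (α : ℝ) : ℝ :=
  α * ‖(tikInv A α ^ 2) (ContinuousLinearMap.adjoint A f)‖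

/-- Error functional `e1(α) = ‖u_α⁺ - u_*‖ + ‖u_α - u_α⁺‖`. -/
def e1 (A : H →L[ℝ] F) (f fstar : F) (ustar : H) (α : ℝ) : ℝ :=
  ‖tikSol A fstar α - ustar‖ + ‖tikSol A f α - tikSol A fstar α‖

/-- Error functional `e2(α, δ) = ‖u_α⁺ - u_*‖ + δ/(2 √α)`. -/
def e2 (A : H →L[ℝ] F) (fstar : F) (ustar : H) (δ α : ℝ) : ℝ :=
  ‖tikSol A fstar α - ustar‖ + δ / (2 * Real.sqrt α)

/-- Modified discrepancy `d_MD(α) = ‖B_α (A u_α - f)‖` where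
`B_α = α^{1/2} (α I + A A*)^{-1/2}`; since `B_α` is positive and selfadjoint,
`‖B_α w‖² = α ⟪(α I + A A*)⁻¹ w, w⟫`, which is used as the definition. -/
def dMD (A : H →L[ℝ] F) (f : F) (α : ℝ) : ℝ :=
  Real.sqrt (α * ⟪(Ring.inverse (α • (1 : F →L[ℝ] F) + A.comp (ContinuousLinearMap.adjoint A)))
      (A (tikSol A f α) - f), A (tikSol A f α) - f⟫)

/-- `k` is a local minimum point of `j ↦ ψ(α_j)` on the grid `j = 0, …, N`:
either `k ≤ N - 1`, `ψ k < ψ (k+1)` and (`k = 0` or there is `j ≥ 1` with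
`ψ k = ψ (k-1) = ⋯ = ψ (k-j+1) < ψ (k-j)`); or `k = N` and there is `j ≥ 1` with
`ψ N = ⋯ = ψ (N-j+1) < ψ (N-j)`. -/
def IsLocMinIdx (ψ : ℕ → ℝ) (N k : ℕ) : Prop :=
  (k < N ∧ ψ k < ψ (k + 1) ∧
    (k = 0 ∨ ∃ j, 1 ≤ j ∧ j ≤ k ∧ (∀ i, k - j < i → i ≤ k → ψ i = ψ k) ∧ ψ k < ψ (k - j)))
  ∨ (k = N ∧ ∃ j, 1 ≤ j ∧ j ≤ N ∧ (∀ i, N - j < i → i ≤ N → ψ i = ψ N) ∧ ψ N < ψ (N - j))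

open ContinuousLinearMap in
lemma tik_isUnit (A : H →L[ℝ] F) {β : ℝ} (hβ : 0 < β) :
    IsUnit (β • (1 : H →L[ℝ] H) + (adjoint A).comp A) := by
  set T := β • (1 : H →L[ℝ] H) + (adjoint A).comp A with hT
  have hTx : ∀ u v : H, ⟪T u, v⟫ = β * ⟪u, v⟫ + ⟪A u, A v⟫ := by
    intro u v
    simp [hT, inner_add_left, real_inner_smul_left, adjoint_inner_left]
  set Bb : H →L[ℝ] H →L[ℝ] ℝ := (innerSL ℝ).comp T with hBb
  have hBbx : ∀ u v : H, Bb u v = ⟪T u, v⟫ := fun u v => rfl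
  have hco : IsCoercive Bb := by
    refine ⟨β, hβ, fun u => ?_⟩
    rw [hBbx, hTx]
    have : ⟪A u, A u⟫ ≥ 0 := real_inner_self_nonneg
    nlinarith [real_inner_self_eq_norm_mul_norm u]
  have hkey : ∀ v : H, T v = InnerProductSpace.continuousLinearMapOfBilin Bb v := by
    intro v
    exact InnerProductSpace.unique_continuousLinearMapOfBilin Bb (fun w => (hBbx v w).symm)
  refine ⟨ContinuousLinearEquiv.toUnit hco.continuousLinearEquivOfBilin, ?_⟩
  ext v
  exact (hkey v).symm

lemma psiQ_le_e1 (A : H →L[ℝ] F) (f fstar : F) (ustar : H)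
    (hA : A ustar = fstar) {β : ℝ} (hβ : 0 < β) :
    psiQ A f β ≤ e1 A f fstar ustar β := by
  set S : H →L[ℝ] H := (ContinuousLinearMap.adjoint A).comp A with hS
  set B : H →L[ℝ] H := β • (1 : H →L[ℝ] H) + S with hB
  have hu : IsUnit B := tik_isUnit A hβ
  set J : H →L[ℝ] H := Ring.inverse B with hJ
  have hJB : J * B = 1 := Ring.inverse_mul_cancel B hu
  have hBJ : B * J = 1 := Ring.mul_inverse_cancel B hu
  have hBapp : ∀ y : H, B y = β • y + S y := by
    intro y; rw [hB]; simp
  have hJBv : ∀ y : H, J (B y) = y := by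
    intro y
    have := congrArg (fun (P : H →L[ℝ] H) => P y) hJB
    simpa [ContinuousLinearMap.mul_apply] using this
  have hBJv : ∀ y : H, B (J y) = y := by
    intro y
    have := congrArg (fun (P : H →L[ℝ] H) => P y) hBJ
    simpa [ContinuousLinearMap.mul_apply] using this
  have hBSv : ∀ w : H, B (S w) = S (B w) := by
    intro w; rw [hBapp, hBapp, map_add, _root_.map_smul]
  have hJS : ∀ z : H, J (S z) = S (J z) := by
    intro z
    conv_rhs => rw [← hJBv (S (J z))]
    rw [hBSv, hBJv]
  -- norm bounds
  have key : ∀ x : H, ‖β • J x‖ ≤ ‖x‖ ∧ ‖S (J x)‖ ≤ ‖x‖ := by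
    intro x
    set y := J x with hy
    have hxy : x = β • y + S y := by rw [← hBJv x, hBapp]
    have h2 : (0:ℝ) ≤ ⟪S y, y⟫ := by
      have : ⟪S y, y⟫ = ⟪A y, A y⟫ := by
        simp [hS, ContinuousLinearMap.adjoint_inner_left]
      rw [this]; exact real_inner_self_nonneg
    have hexp : ‖x‖^2 = β^2*‖y‖^2 + 2*β*⟪S y, y⟫ + ‖S y‖^2 := by
      rw [hxy, norm_add_sq_real, norm_smul, real_inner_smul_left]
      rw [real_inner_comm]
      simp [abs_of_pos hβ]
      ring
    have hb : ‖β • y‖ = β * ‖y‖ := by rw [norm_smul]; simp [abs_of_pos hβ]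
    constructor
    · nlinarith [norm_nonneg (S y), norm_nonneg x, norm_nonneg y, mul_pos hβ hβ]
    · nlinarith [norm_nonneg (S y), norm_nonneg x, norm_nonneg y]
  set g := ContinuousLinearMap.adjoint A f with hg
  set u := tikSol A f β with hu2
  set up := tikSol A fstar β with hup
  have hu2' : u = J g := rfl
  have hup' : up = J (S ustar) := by
    rw [hup, tikSol, hS]
    congr 1
    simp [← hA]
  have hbu : β • J ustar = ustar - up := by
    have h := hJBv ustar
    rw [hBapp, map_add, _root_.map_smul] at h
    rw [hup']
    exact eq_sub_of_add_eq h
  have hid : β • (J (J g)) = β • (J (u - up)) + S (J (ustar - up)) := by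
    have t1 : S (J (ustar - up)) = β • (J (J (S ustar))) := by
      rw [show ustar - up = β • J ustar from hbu.symm]
      simp only [_root_.map_smul]
      rw [← hJS (J ustar), ← hJS ustar]
    have t2 : J (u - up) = J (J g) - J (J (S ustar)) := by
      rw [hu2', hup', map_sub]
    rw [t1, t2, smul_sub]
    abel
  have hψ : psiQ A f β ≤ ‖u - up‖ + ‖ustar - up‖ := by
    have hpow : (tikInv A β ^ 2) (ContinuousLinearMap.adjoint A f) = J (J g) := by
      rw [pow_two, ContinuousLinearMap.mul_apply]; rfl
    have hpq : psiQ A f β = ‖β • (J (J g))‖ := by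
      rw [psiQ, hpow, norm_smul, Real.norm_eq_abs, abs_of_pos hβ]
    rw [hpq, hid]
    exact (norm_add_le _ _).trans (add_le_add (key _).1 (key _).2)
  have he1 : e1 A f fstar ustar β = ‖up - ustar‖ + ‖u - up‖ := rfl
  rw [he1, norm_sub_rev up ustar]
  linarith

/-- for `α, β > 0` with `ψ_Q(β) > 0`,
`‖u_α - u_*‖ ≤ (1 + T(α,β)) e1(β)` where `T(α,β) = ‖u_α - u_β‖/ψ_Q(β)`. -/
theorem err_le_one_add_T_mul_e1 (A : H →L[ℝ] F) (f fstar : F) (ustar : H)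
    (hA : A ustar = fstar) (α β : ℝ) (hα : 0 < α) (hβ : 0 < β)
    (hψ : 0 < psiQ A f β) :
    ‖tikSol A f α - ustar‖ ≤
      (1 + ‖tikSol A f α - tikSol A f β‖ / psiQ A f β) * e1 A f fstar ustar β := by
  have hle : psiQ A f β ≤ e1 A f fstar ustar β := psiQ_le_e1 A f fstar ustar hA hβ
  set T := ‖tikSol A f α - tikSol A f β‖ / psiQ A f β with hTdef
  have hTnn : 0 ≤ T := div_nonneg (norm_nonneg _) hψ.le
  have hT : ‖tikSol A f α - tikSol A f β‖ = T * psiQ A f β := by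
    rw [hTdef]; field_simp
  have h1 : ‖tikSol A f α - tikSol A f β‖ ≤ T * e1 A f fstar ustar β := by
    rw [hT]; exact mul_le_mul_of_nonneg_left hle hTnn
  have htri : ‖tikSol A f α - ustar‖ ≤
      ‖tikSol A f α - tikSol A f β‖ + ‖tikSol A f β - tikSol A fstar β‖
        + ‖tikSol A fstar β - ustar‖ := by
    calc ‖tikSol A f α - ustar‖ ≤ ‖tikSol A f α - tikSol A f β‖ + ‖tikSol A f β - ustar‖ :=
          norm_sub_le_norm_sub_add_norm_sub _ _ _
      _ ≤ _ := by
          have := norm_sub_le_norm_sub_add_norm_sub (tikSol A f β) (tikSol A fstar β) ustar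
          linarith
  have he1 : e1 A f fstar ustar β = ‖tikSol A fstar β - ustar‖
      + ‖tikSol A f β - tikSol A fstar β‖ := rfl
  nlinarith [norm_nonneg (tikSol A fstar β - ustar), norm_nonneg (tikSol A f β - tikSol A fstar β)]
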